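/- Let v be a finite type invariant of degree ≤ 1 and let w be any signed word with n letters. Then v(w) = v(φ) + n·(v(AA) − v(φ)), where AA denotes the one-letter positive signed word. -/

import Mathlib

/-- Letters are indexed by natural numbers; a signed letter carries a sign
(`true` = `+`, `false` = `−`). -/
abbrev Letter : Type := ℕ × Bool

/-- A signed word: every entry occurs exactly twice, and the two occurrences of
any letter carry the same sign. -/
def IsSignedWord (w : List Letter) : Prop :=
  ∀ p ∈ w, w.count p = 2 ∧ ∀ q ∈ w, q.1 = p.1 → q.2 = p.2

/-- Signed words (concrete representatives; isomorphism is subsumed by cyclic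
equivalence below). -/
def SignedWord : Type := {w : List Letter // IsSignedWord w}

/-- The set of letters occurring in a list of signed letters. -/
def lettersL (w : List Letter) : Finset ℕ := (w.map Prod.fst).toFinset

/-- The set of letters of a signed word. -/
def SignedWord.letters (w : SignedWord) : Finset ℕ := lettersL w.1

/-- The number of (distinct) letters of a signed word. -/
def SignedWord.numLetters (w : SignedWord) : ℕ := w.letters.card

theorem isSignedWord_filter (q : ℕ → Bool) {w : List Letter} (hw : IsSignedWord w) :
    IsSignedWord (w.filter fun p => q p.1) := by
  intro p hp
  rw [List.mem_filter] at hp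
  refine ⟨?_, fun r hr => (hw p hp.1).2 r (List.mem_filter.mp hr).1⟩
  rw [List.count_filter (p := fun r : Letter => q r.1) hp.2]
  exact (hw p hp.1).1

/-- Delete both occurrences of every letter of `T` from `w`. -/
def SignedWord.delete (w : SignedWord) (T : Finset ℕ) : SignedWord :=
  ⟨w.1.filter fun p => decide (p.1 ∉ T), isSignedWord_filter (fun a => decide (a ∉ T)) w.2⟩

/-- The induced signed subword of `w` on a set `U` of letters. -/
def SignedWord.restrict (w : SignedWord) (U : Finset ℕ) : SignedWord :=
  ⟨w.1.filter fun p => decide (p.1 ∈ U), isSignedWord_filter (fun a => decide (a ∈ U)) w.2⟩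

/-- Sign-preserving relabeling of letters. -/
def Iso (w w' : List Letter) : Prop :=
  ∃ f : ℕ ≃ ℕ, w' = w.map fun p => (f p.1, p.2)

/-- The basic move `A^ε x A^ε y ↦ x A^(−ε) y A^(−ε)`. -/
def Move (w w' : List Letter) : Prop :=
  ∃ (a : ℕ) (s : Bool) (x y : List Letter),
    w = (a, s) :: (x ++ (a, s) :: y) ∧ w' = x ++ (a, !s) :: (y ++ [(a, !s)])

/-- Cyclic equivalence of signed words: the equivalence relation generated by
isomorphism together with the basic move. -/
def CyclicEquivL : List Letter → List Letter → Prop :=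
  Relation.EqvGen fun w w' => Iso w w' ∨ Move w w'

/-- Cyclic equivalence of signed words. -/
def SignedWord.CyclicEquiv (w w' : SignedWord) : Prop := CyclicEquivL w.1 w'.1

/-- A cyclic equivalence invariant with values in `F`. -/
def WordInvariant (F : Type*) [Field F] (v : SignedWord → F) : Prop :=
  ∀ w w' : SignedWord, w.CyclicEquiv w' → v w = v w'

/-- The prolongation of `v` to the singular signed word `(w, S)` (the letters of
`S` being declared singular), given by inclusion–exclusion. -/
def prolong (F : Type*) [Field F] (v : SignedWord → F) (w : SignedWord) (S : Finset ℕ) : F :=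
  ∑ T ∈ S.powerset, (-1 : F) ^ T.card * v (w.delete T)

/-- `v` is a finite type invariant of degree ≤ `n`: it is a cyclic equivalence
invariant whose prolongation vanishes on every singular signed word with more
than `n` singular letters. -/
def FiniteTypeLe (F : Type*) [Field F] (n : ℕ) (v : SignedWord → F) : Prop :=
  WordInvariant F v ∧
    ∀ (w : SignedWord) (S : Finset ℕ), S ⊆ w.letters → n < S.card →
      prolong F v w S = 0

/-- The empty signed word `φ`. -/
def wordEmpty : SignedWord := ⟨[], by intro p hp; simp at hp⟩

/-- The one-letter positive signed word `AA`. -/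
def wordAA : SignedWord := ⟨[(0, true), (0, true)], by unfold IsSignedWord; decide⟩

/-- The one-letter negative signed word `ĀĀ`. -/
def wordAAneg : SignedWord := ⟨[(0, false), (0, false)], by unfold IsSignedWord; decide⟩

/-- The two-letter signed word `AABB`. -/
def wordAABB : SignedWord := ⟨[(0, true), (0, true), (1, true), (1, true)], by unfold IsSignedWord; decide⟩

/-- The two-letter signed word `AAB̄B̄`. -/
def wordAABnBn : SignedWord := ⟨[(0, true), (0, true), (1, false), (1, false)], by unfold IsSignedWord; decide⟩

/-- The two-letter signed word `AB̄B̄A`. -/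
def wordABnBnA : SignedWord := ⟨[(0, true), (1, false), (1, false), (0, true)], by unfold IsSignedWord; decide⟩

/-- The two-letter signed word `ABAB`. -/
def wordABAB : SignedWord := ⟨[(0, true), (1, true), (0, true), (1, true)], by unfold IsSignedWord; decide⟩

/-- The underlying list of the word `A₁A₁A₂A₂…AₙAₙ` (all letters positive). -/
def wListN (n : ℕ) : List Letter := (List.range n).flatMap fun i => [(i, true), (i, true)]

/-- `Ncount u w`: the number of `k`-element subsets of the letters of `w`
(`k` = number of letters of `u`) whose induced signed subword is cyclically
equivalent to (an isomorphic copy of) `u`. -/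
noncomputable def Ncount (u w : SignedWord) : ℕ := by
  classical
  exact (w.letters.powerset.filter fun U =>
    U.card = u.numLetters ∧ (w.restrict U).CyclicEquiv u).card

theorem prolong_add (F : Type*) [Field F] (v₁ v₂ : SignedWord → F) (w : SignedWord) (S : Finset ℕ) :
    prolong F (v₁ + v₂) w S = prolong F v₁ w S + prolong F v₂ w S := by
  simp [prolong, ← Finset.sum_add_distrib, mul_add]

theorem prolong_smul (F : Type*) [Field F] (c : F) (v : SignedWord → F) (w : SignedWord) (S : Finset ℕ) :
    prolong F (c • v) w S = c * prolong F v w S := by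
  rw [prolong, prolong, Finset.mul_sum]
  exact Finset.sum_congr rfl fun T _ => by simp [mul_left_comm]

/-- The `F`-vector space `Vₙ` of finite type invariants of degree ≤ `n`. -/
def Vn (F : Type*) [Field F] (n : ℕ) : Submodule F (SignedWord → F) where
  carrier := {v | FiniteTypeLe F n v}
  add_mem' := by
    rintro v₁ v₂ ⟨h1, h1'⟩ ⟨h2, h2'⟩
    refine ⟨fun w w' h => by simp [h1 w w' h, h2 w w' h], fun w S hS hc => ?_⟩
    rw [prolong_add, h1' w S hS hc, h2' w S hS hc, add_zero]
  zero_mem' := ⟨fun _ _ _ => rfl, fun w S hS hc => by simp [prolong]⟩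
  smul_mem' := by
    rintro c v ⟨h, h'⟩
    refine ⟨fun w w' hww => by simp [h w w' hww], fun w S hS hc => ?_⟩
    rw [prolong_smul, h' w S hS hc, mul_zero]

/-- Cyclic equivalence as a setoid on signed words. -/
def cycSetoid : Setoid SignedWord :=
  ⟨SignedWord.CyclicEquiv, fun w => Relation.EqvGen.refl w.1,
    fun h => Relation.EqvGen.symm _ _ h, fun h h' => Relation.EqvGen.trans _ _ _ h h'⟩

/-!
A finite type invariant of degree ≤ 1 has vanishing prolongation on every singular word with two
singular letters `a ≠ b`, i.e. `v u - v (u ∖ a) = v (u ∖ b) - v (u ∖ {a, b})`. So the jump of `v`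
caused by deleting a letter does not depend on which other letters have already been deleted.
Deleting all other letters first leaves the one-letter word on `a`, which is cyclically equivalent
to `AA`; hence every deletion of a letter changes `v` by `v(AA) - v(φ)`, and deleting all `n`
letters of `w` reaches `φ`.
-/

lemma mem_lettersL {w : List Letter} {a : ℕ} : a ∈ lettersL w ↔ ∃ p ∈ w, p.1 = a := by
  simp [lettersL]

namespace SignedWord

@[simp]
lemma delete_empty (w : SignedWord) : w.delete ∅ = w :=
  Subtype.ext (by simp [delete])

lemma delete_delete (w : SignedWord) (T T' : Finset ℕ) :
    (w.delete T).delete T' = w.delete (T ∪ T') := by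
  apply Subtype.ext
  simp only [delete, List.filter_filter, Finset.mem_union, not_or, Bool.decide_and, Bool.and_comm]

lemma letters_delete (w : SignedWord) (T : Finset ℕ) :
    (w.delete T).letters = w.letters \ T := by
  ext x
  simp only [letters, delete, mem_lettersL, Finset.mem_sdiff, List.mem_filter, decide_eq_true_eq]
  constructor
  · rintro ⟨p, ⟨hp, hpT⟩, rfl⟩
    exact ⟨⟨p, hp, rfl⟩, hpT⟩
  · rintro ⟨⟨p, hp, rfl⟩, hxT⟩
    exact ⟨p, ⟨hp, hxT⟩, rfl⟩

lemma delete_letters (w : SignedWord) : w.delete w.letters = wordEmpty := by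
  apply Subtype.ext
  simp only [delete, wordEmpty, List.filter_eq_nil_iff, decide_eq_true_eq, not_not]
  exact fun p hp => mem_lettersL.mpr ⟨p, hp, rfl⟩

lemma delete_letters_erase (w : SignedWord) (a : ℕ) :
    w.delete (w.letters.erase a) = w.restrict {a} := by
  apply Subtype.ext
  apply List.filter_congr
  intro p hp
  have hpL : p.1 ∈ w.letters := mem_lettersL.mpr ⟨p, hp, rfl⟩
  simp [Finset.mem_erase, hpL]

lemma restrict_singleton_eq {w : SignedWord} {a : ℕ} (ha : a ∈ w.letters) :
    ∃ s, (w.restrict {a}).1 = [(a, s), (a, s)] := by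
  obtain ⟨p, hp, rfl⟩ := mem_lettersL.mp ha
  refine ⟨p.2, ?_⟩
  have hfilter : (w.restrict {p.1}).1 = w.1.filter (· == p) := by
    refine List.filter_congr fun q hq => ?_
    simp only [Finset.mem_singleton, beq_eq_decide, decide_eq_decide]
    exact ⟨fun h => Prod.ext h ((w.2 p hp).2 q hq h), fun h => h ▸ rfl⟩
  rw [hfilter, List.filter_beq, (w.2 p hp).1]
  rfl

end SignedWord

lemma cyclicEquivL_pair_wordAA (a : ℕ) (s : Bool) : CyclicEquivL [(a, s), (a, s)] wordAA.1 := by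
  have relabel : ∀ t : Bool, CyclicEquivL [(a, t), (a, t)] [(0, t), (0, t)] := fun t =>
    Relation.EqvGen.rel _ _ (Or.inl ⟨Equiv.swap a 0, by simp⟩)
  cases s with
  | true => exact relabel true
  | false =>
    -- the move `A A ↦ Ā Ā` on the two-letter word, read backwards
    exact (relabel false).trans _ _ _
      (Relation.EqvGen.symm _ _ (Relation.EqvGen.rel _ _ (Or.inr ⟨0, true, [], [], rfl, rfl⟩)))

lemma SignedWord.restrict_singleton_cyclicEquiv {w : SignedWord} {a : ℕ} (ha : a ∈ w.letters) :
    (w.restrict {a}).CyclicEquiv wordAA := by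
  obtain ⟨s, hs⟩ := restrict_singleton_eq ha
  show CyclicEquivL _ _
  rw [hs]
  exact cyclicEquivL_pair_wordAA a s

lemma prolong_pair {F : Type*} [Field F] (v : SignedWord → F) (u : SignedWord) {a b : ℕ}
    (hab : a ≠ b) :
    prolong F v u {a, b} =
      v u - v (u.delete {a}) - v (u.delete {b}) + v (u.delete {a, b}) := by
  have ha : a ∉ ({b} : Finset ℕ) := Finset.notMem_singleton.mpr hab
  have hpow : ({b} : Finset ℕ).powerset = {∅, {b}} := by
    ext t
    simp [Finset.subset_singleton_iff]
  rw [prolong, Finset.sum_powerset_insert ha, hpow,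
    Finset.sum_pair (Finset.empty_ne_singleton b), Finset.sum_pair (by simp)]
  simp only [Finset.card_empty, Finset.card_singleton, Finset.card_pair hab, insert_empty_eq,
    SignedWord.delete_empty]
  ring

namespace FiniteTypeLe

variable {F : Type*} [Field F] {v : SignedWord → F}

lemma sub_delete_eq_sub_delete (hv : FiniteTypeLe F 1 v) {u : SignedWord} {a b : ℕ} (hab : a ≠ b)
    (ha : a ∈ u.letters) (hb : b ∈ u.letters) :
    v u - v (u.delete {a}) = v (u.delete {b}) - v (u.delete {a, b}) := by
  have h := hv.2 u {a, b} (Finset.insert_subset ha (Finset.singleton_subset_iff.mpr hb))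
    (by rw [Finset.card_pair hab]; exact one_lt_two)
  rw [prolong_pair v u hab] at h
  linear_combination h

lemma sub_delete_insert (hv : FiniteTypeLe F 1 v) {w : SignedWord} {a : ℕ} (ha : a ∈ w.letters)
    {T : Finset ℕ} (hT : T ⊆ w.letters) (haT : a ∉ T) :
    v (w.delete T) - v (w.delete (insert a T)) = v w - v (w.delete {a}) := by
  induction T using Finset.induction_on with
  | empty => simp
  | @insert b T hbT ih =>
    obtain ⟨hb, hT'⟩ := Finset.insert_subset_iff.mp hT
    obtain ⟨hab, haT'⟩ : a ≠ b ∧ a ∉ T := by simpa using haT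
    have h := hv.sub_delete_eq_sub_delete hab
      (by simpa [SignedWord.letters_delete] using ⟨ha, haT'⟩ : a ∈ (w.delete T).letters)
      (by simpa [SignedWord.letters_delete] using ⟨hb, hbT⟩ : b ∈ (w.delete T).letters)
    simp only [SignedWord.delete_delete, Finset.union_singleton, Finset.insert_eq a {b},
      Finset.union_insert] at h
    rw [Finset.insert_comm a b, ← ih hT' haT', h]

lemma sub_delete_singleton (hv : FiniteTypeLe F 1 v) {w : SignedWord} {a : ℕ}
    (ha : a ∈ w.letters) :
    v w - v (w.delete {a}) = v wordAA - v wordEmpty := by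
  have h := hv.sub_delete_insert ha (Finset.erase_subset a w.letters) (Finset.notMem_erase a _)
  rw [Finset.insert_erase ha, SignedWord.delete_letters, SignedWord.delete_letters_erase,
    hv.1 _ _ (SignedWord.restrict_singleton_cyclicEquiv ha)] at h
  exact h.symm

lemma sub_delete (hv : FiniteTypeLe F 1 v) (w : SignedWord) {T : Finset ℕ}
    (hT : T ⊆ w.letters) :
    v w - v (w.delete T) = T.card * (v wordAA - v wordEmpty) := by
  induction T using Finset.induction_on with
  | empty => simp
  | @insert a T haT ih =>
    have hT' := (Finset.insert_subset_iff.mp hT).2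
    have ha : a ∈ (w.delete T).letters := by
      rw [SignedWord.letters_delete]
      exact Finset.mem_sdiff.mpr ⟨hT (Finset.mem_insert_self a T), haT⟩
    have step := hv.sub_delete_singleton ha
    rw [SignedWord.delete_delete, Finset.union_singleton] at step
    rw [Finset.card_insert_of_notMem haT]
    push_cast
    linear_combination ih hT' + step

end FiniteTypeLe

/-- a finite type invariant of degree ≤ 1 satisfies
`v(w) = v(φ) + n·(v(AA) − v(φ))` where `n` is the number of letters of `w`. -/
theorem finiteTypeLe_one_value (F : Type*) [Field F] (v : SignedWord → F)
    (hv : FiniteTypeLe F 1 v) (w : SignedWord) :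
    v w = v wordEmpty + (w.numLetters : F) * (v wordAA - v wordEmpty) := by
  have h := hv.sub_delete w (Finset.Subset.refl w.letters)
  rw [SignedWord.delete_letters] at h
  rw [SignedWord.numLetters]
  linear_combination h
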